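/- arXiv:1104.0750 — 4 statements merged into one kernel-verified Lean document; each statement's English description precedes it below -/
import Mathlib

section
/- Let X be a real Banach space, A : X ⇒ X* monotone with (0,0) ∈ gra A, and suppose A is of type (FP). Fix (x₀**, x₀*) ∈ X** × X* and a bounded net (x_α) in X weak*-converging to x₀** with sup_α ‖x_α‖ = M < ∞. Suppose for every α, (x_α, x₀*) ∉ gra A. Then for every ε > 0, F_A(x₀**, x₀*) ≥ ⟨x₀**, x₀*⟩ − ε(‖x₀**‖ + M), where F_A is the extended Fitzpatrick function. -/
open NormedSpace Filter

noncomputable section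

variable {X : Type*}

/-- A set-valued operator `A : X ⇒ X*` identified with its graph is monotone. -/
def IsMonotoneGraph [NormedAddCommGroup X] [NormedSpace ℝ X]
    (A : Set (X × StrongDual ℝ X)) : Prop :=
  ∀ p ∈ A, ∀ q ∈ A, 0 ≤ (p.2 - q.2) (p.1 - q.1)

/-- Maximal monotonicity: monotone, and every monotonically related pair belongs to the graph. -/
def IsMaxMonotoneGraph [NormedAddCommGroup X] [NormedSpace ℝ X]
    (A : Set (X × StrongDual ℝ X)) : Prop :=
  IsMonotoneGraph A ∧
    ∀ (x : X) (x' : StrongDual ℝ X), (∀ a ∈ A, 0 ≤ (x' - a.2) (x - a.1)) → (x, x') ∈ A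

/-- The Fitzpatrick function on `X × X*`, valued in the extended reals. -/
def fitz [NormedAddCommGroup X] [NormedSpace ℝ X]
    (A : Set (X × StrongDual ℝ X)) (x : X) (x' : StrongDual ℝ X) : EReal :=
  ⨆ a ∈ A, ((a.2 x + x' a.1 - a.2 a.1 : ℝ) : EReal)

/-- The extended Fitzpatrick function on `X** × X*`, valued in the extended reals. -/
def fitzExt [NormedAddCommGroup X] [NormedSpace ℝ X]
    (A : Set (X × StrongDual ℝ X)) (x'' : StrongDual ℝ (StrongDual ℝ X)) (x' : StrongDual ℝ X) : EReal :=
  ⨆ a ∈ A, ((x'' a.2 + x' a.1 - a.2 a.1 : ℝ) : EReal)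

/-- The range of the operator with graph `A`. -/
def graphRan [NormedAddCommGroup X] [NormedSpace ℝ X]
    (A : Set (X × StrongDual ℝ X)) : Set (StrongDual ℝ X) :=
  Prod.snd '' A

/-- Type (FP): Fitzpatrick–Phelps operators. -/
def IsTypeFP [NormedAddCommGroup X] [NormedSpace ℝ X]
    (A : Set (X × StrongDual ℝ X)) : Prop :=
  ∀ U : Set (StrongDual ℝ X), IsOpen U → Convex ℝ U → (U ∩ graphRan A).Nonempty →
    ∀ (x : X) (x' : StrongDual ℝ X), x' ∈ U →
      (∀ a ∈ A, a.2 ∈ U → 0 ≤ (x' - a.2) (x - a.1)) → (x, x') ∈ A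

/-- Type (NI): negative infimum operators. -/
def IsTypeNI [NormedAddCommGroup X] [NormedSpace ℝ X]
    (A : Set (X × StrongDual ℝ X)) : Prop :=
  ∀ (x'' : StrongDual ℝ (StrongDual ℝ X)) (x' : StrongDual ℝ X),
    ((x'' x' : ℝ) : EReal) ≤ fitzExt A x'' x'

/-- Type (D): dense type operators (Gossez). -/
def IsTypeD.{u} [NormedAddCommGroup X] [NormedSpace ℝ X]
    (A : Set (X × StrongDual ℝ X)) : Prop :=
  ∀ (x'' : StrongDual ℝ (StrongDual ℝ X)) (x' : StrongDual ℝ X),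
    (∀ a ∈ A, 0 ≤ a.2 a.1 - x' a.1 - x'' a.2 + x'' x') →
    ∃ (ι : Type u) (l : Filter ι), l.NeBot ∧ ∃ a : ι → X × StrongDual ℝ X,
      (∀ i, a i ∈ A) ∧ (∃ M : ℝ, ∀ i, ‖(a i).1‖ ≤ M ∧ ‖(a i).2‖ ≤ M) ∧
      (∀ f : StrongDual ℝ X, Tendsto (fun i => f ((a i).1)) l (nhds (x'' f))) ∧
      Tendsto (fun i => (a i).2) l (nhds x')

open Pointwise Metric

/-!
For each `α` the pair `(x α, x₀*)` lies outside the graph, so type (FP), applied to the open convex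
set `U = [0, x₀*] + ε B_{X*}` (which meets `ran A` at `0`), yields `(a, a*) ∈ A` with `a* ∈ U` not
monotonically related to it. Writing `a* = t x₀* + c` with `t ∈ [0, 1]` and `‖c‖ < ε`, the
Fitzpatrick term at `(a, a*)` is at least
`⟨x₀**, x₀*⟩ - |⟨x α, x₀*⟩ - ⟨x₀**, x₀*⟩| - ε (‖x₀**‖ + M)`, and the middle term tends to `0`
along the net.
-/

theorem coe_le_fitzExt_of_mem [NormedAddCommGroup X] [NormedSpace ℝ X]
    {A : Set (X × StrongDual ℝ X)} {a : X × StrongDual ℝ X} (ha : a ∈ A)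
    (x'' : StrongDual ℝ (StrongDual ℝ X)) (x' : StrongDual ℝ X) :
    ((x'' a.2 + x' a.1 - a.2 a.1 : ℝ) : EReal) ≤ fitzExt A x'' x' :=
  le_iSup₂ (f := fun (b : X × StrongDual ℝ X) (_ : b ∈ A) =>
    ((x'' b.2 + x' b.1 - b.2 b.1 : ℝ) : EReal)) a ha

theorem exists_not_monotonicallyRelated_of_isTypeFP [NormedAddCommGroup X] [NormedSpace ℝ X]
    {A : Set (X × StrongDual ℝ X)} (hFP : IsTypeFP A) {U : Set (StrongDual ℝ X)}
    (hU : IsOpen U) (hUc : Convex ℝ U) (hUA : (U ∩ graphRan A).Nonempty)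
    {x : X} {x' : StrongDual ℝ X} (hx' : x' ∈ U) (hnot : (x, x') ∉ A) :
    ∃ a ∈ A, a.2 ∈ U ∧ (x' - a.2) (x - a.1) < 0 := by
  by_contra! h
  exact hnot (hFP U hU hUc hUA x x' hx' h)

theorem exists_eq_smul_add_of_mem_segment_add_ball {E : Type*} [SeminormedAddCommGroup E]
    [NormedSpace ℝ E] {v w : E} {ε : ℝ} (hw : w ∈ segment ℝ 0 v + ball 0 ε) :
    ∃ t ∈ Set.Icc (0 : ℝ) 1, ∃ c : E, ‖c‖ < ε ∧ w = t • v + c := by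
  obtain ⟨p, hp, c, hc, rfl⟩ := hw
  rw [segment_eq_image] at hp
  obtain ⟨t, ht, rfl⟩ := hp
  exact ⟨t, ht, c, mem_ball_zero_iff.mp hc, by simp⟩

theorem le_fitzTerm_of_not_monotonicallyRelated [NormedAddCommGroup X] [NormedSpace ℝ X]
    (x'' : StrongDual ℝ (StrongDual ℝ X)) {x' a' : StrongDual ℝ X} {y a : X} {ε M : ℝ}
    (ha' : a' ∈ segment ℝ 0 x' + ball 0 ε) (hy : ‖y‖ ≤ M) (hlt : (x' - a') (y - a) < 0) :
    x'' x' - |x' y - x'' x'| - ε * (‖x''‖ + M) ≤ x'' a' + x' a - a' a := by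
  obtain ⟨t, ⟨ht0, ht1⟩, c, hc, rfl⟩ := exists_eq_smul_add_of_mem_segment_add_ball ha'
  have hx''c : |x'' c| ≤ ε * ‖x''‖ :=
    (x''.le_opNorm c).trans (by rw [mul_comm]; gcongr)
  have hcy : |c y| ≤ ε * M :=
    (c.le_opNorm y).trans (mul_le_mul hc.le hy (norm_nonneg _) ((norm_nonneg c).trans hc.le))
  have hdev : -|x' y - x'' x'| ≤ (1 - t) * (x' y - x'' x') := by
    nlinarith [neg_abs_le (x' y - x'' x'), le_abs_self (x' y - x'' x')]
  simp only [sub_apply, add_apply, FunLike.coe_smul, Pi.smul_apply, smul_eq_mul, map_sub,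
    map_add, map_smul] at hlt ⊢
  linarith [(abs_le.mp hx''c).1, (abs_le.mp hcy).2]

theorem le_fitzExt_of_isTypeFP_of_not_mem [NormedAddCommGroup X] [NormedSpace ℝ X]
    {A : Set (X × StrongDual ℝ X)} (h0 : ((0 : X), (0 : StrongDual ℝ X)) ∈ A)
    (hFP : IsTypeFP A) (x'' : StrongDual ℝ (StrongDual ℝ X)) {x' : StrongDual ℝ X} {y : X}
    (hy : (y, x') ∉ A) {ε M : ℝ} (hε : 0 < ε) (hyM : ‖y‖ ≤ M) :
    ((x'' x' - |x' y - x'' x'| - ε * (‖x''‖ + M) : ℝ) : EReal) ≤ fitzExt A x'' x' := by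
  set U : Set (StrongDual ℝ X) := segment ℝ 0 x' + ball 0 ε
  have hU : IsOpen U := isOpen_ball.add_left
  have hUc : Convex ℝ U := (convex_segment _ _).add (convex_ball _ _)
  have mem_U : ∀ v ∈ segment ℝ 0 x', v ∈ U := fun v hv =>
    ⟨v, hv, 0, mem_ball_self hε, add_zero v⟩
  have hUA : (U ∩ graphRan A).Nonempty :=
    ⟨0, mem_U 0 (left_mem_segment _ _ _), (0, 0), h0, rfl⟩
  obtain ⟨a, ha, haU, hlt⟩ := exists_not_monotonicallyRelated_of_isTypeFP hFP hU hUc hUA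
    (mem_U x' (right_mem_segment _ _ _)) hy
  exact (EReal.coe_le_coe_iff.mpr (le_fitzTerm_of_not_monotonicallyRelated x'' haU hyM hlt)).trans
    (coe_le_fitzExt_of_mem ha x'' x')

theorem fitzExt_lower_bound_of_typeFP_general [NormedAddCommGroup X] [NormedSpace ℝ X]
    (A : Set (X × StrongDual ℝ X))
    (h0 : ((0 : X), (0 : StrongDual ℝ X)) ∈ A) (hFP : IsTypeFP A)
    (x₀'' : StrongDual ℝ (StrongDual ℝ X)) (x₀' : StrongDual ℝ X)
    {ι : Type*} (l : Filter ι) (hl : l.NeBot) (x : ι → X)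
    (hconv : ∀ f : StrongDual ℝ X, Tendsto (fun α => f (x α)) l (nhds (x₀'' f)))
    (M : ℝ) (hM : ∀ α, ‖x α‖ ≤ M)
    (hnot : ∀ α, (x α, x₀') ∉ A)
    (ε : ℝ) (hε : 0 < ε) :
    ((x₀'' x₀' - ε * (‖x₀''‖ + M) : ℝ) : EReal) ≤ fitzExt A x₀'' x₀' := by
  have hdev : Tendsto (fun α => |x₀' (x α) - x₀'' x₀'|) l (nhds 0) := by
    simpa using ((hconv x₀').sub_const (x₀'' x₀')).abs
  have hlim : Tendsto (fun α => ((x₀'' x₀' - |x₀' (x α) - x₀'' x₀'| - ε * (‖x₀''‖ + M) : ℝ) :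
      EReal)) l (nhds ((x₀'' x₀' - ε * (‖x₀''‖ + M) : ℝ) : EReal)) :=
    EReal.tendsto_coe.mpr (by simpa using (hdev.const_sub (x₀'' x₀')).sub_const _)
  exact le_of_tendsto' hlim fun α =>
    le_fitzExt_of_isTypeFP_of_not_mem h0 hFP x₀'' (hnot α) hε (hM α)

/-- key estimate in the main theorem: for an (FP) operator with `(0,0)` in its
graph and a bounded net in `X` weak*-converging to `x₀**` avoiding the graph at level `x₀*`,
the extended Fitzpatrick function is bounded below by `⟨x₀**,x₀*⟩ − ε(‖x₀**‖ + M)`. -/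
theorem fitzExt_lower_bound_of_typeFP [NormedAddCommGroup X] [NormedSpace ℝ X]
    [CompleteSpace X]
    (A : Set (X × StrongDual ℝ X)) (hA : IsMonotoneGraph A)
    (h0 : ((0 : X), (0 : StrongDual ℝ X)) ∈ A) (hFP : IsTypeFP A)
    (x₀'' : StrongDual ℝ (StrongDual ℝ X)) (x₀' : StrongDual ℝ X)
    {ι : Type*} (l : Filter ι) (hl : l.NeBot) (x : ι → X)
    (hconv : ∀ f : StrongDual ℝ X, Tendsto (fun α => f (x α)) l (nhds (x₀'' f)))
    (M : ℝ) (hM : ∀ α, ‖x α‖ ≤ M)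
    (hnot : ∀ α, (x α, x₀') ∉ A)
    (ε : ℝ) (hε : 0 < ε) :
    ((x₀'' x₀' - ε * (‖x₀''‖ + M) : ℝ) : EReal) ≤ fitzExt A x₀'' x₀' :=
  fitzExt_lower_bound_of_typeFP_general A h0 hFP x₀'' x₀' l hl x hconv M hM hnot ε hε
end
end

section
/- Let X be a real Banach space and A : X ⇒ X* a maximally monotone operator of type (FP). Then A is of type (NI): for every (x**, x*) ∈ X** × X*, sup_{(a,a*) ∈ gra A} (⟨a, x*⟩ + ⟨a*, x**⟩ − ⟨a, a*⟩) ≥ ⟨x**, x*⟩. -/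
open NormedSpace Filter

noncomputable section

variable {X : Type*}

/-!
Suppose `sup_{(a,a*) ∈ gra A} (x** a* + x* a - a* a) ≤ c < x** x*`. Pick `(a₀, a₀*) ∈ gra A` and
`x₀ ∈ X` with `a₀* x₀ + x** a₀* = x* x₀ + x** x*`. The functional `G := x₀ + x**` on `X*` cuts
out an open half-space `U = {G > G x* - (x** x* - c)}` containing `x*` and `a₀*`, and the bound
on the Fitzpatrick terms makes `(-x₀, x*)` monotonically related to `gra A ∩ (X × U)`.
Type (FP) puts `(-x₀, x*)` in `gra A`, whose Fitzpatrick term is `x** x* ≤ c`: a contradiction.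
-/

section

variable [NormedAddCommGroup X] [NormedSpace ℝ X]

theorem IsMaxMonotoneGraph.nonempty {A : Set (X × StrongDual ℝ X)} (hA : IsMaxMonotoneGraph A) :
    A.Nonempty :=
  A.eq_empty_or_nonempty.elim (fun h => ⟨(0, 0), hA.2 0 0 (by simp [h])⟩) id

theorem fitzExt_le_coe_iff {A : Set (X × StrongDual ℝ X)} {x'' : StrongDual ℝ (StrongDual ℝ X)}
    {x' : StrongDual ℝ X} {c : ℝ} :
    fitzExt A x'' x' ≤ c ↔ ∀ a ∈ A, x'' a.2 + x' a.1 - a.2 a.1 ≤ c := by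
  simp only [fitzExt, iSup₂_le_iff, EReal.coe_le_coe_iff]

theorem exists_apply_add_eq_zero (φ : StrongDual ℝ (StrongDual ℝ X)) (v : StrongDual ℝ X) :
    ∃ x : X, v x + φ v = 0 := by
  by_cases hv : v = 0
  · exact ⟨0, by simp [hv]⟩
  · have hv' : (v : X →ₗ[ℝ] ℝ) ≠ 0 := fun h => hv (ContinuousLinearMap.coe_injective h)
    obtain ⟨x, hx⟩ := LinearMap.surjective hv' (-φ v)
    exact ⟨x, by simp_all⟩

theorem IsTypeFP.apply_le_of_fitzExt_le {A : Set (X × StrongDual ℝ X)} (hFP : IsTypeFP A)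
    {a₀ : X × StrongDual ℝ X} (ha₀ : a₀ ∈ A) {x'' : StrongDual ℝ (StrongDual ℝ X)}
    {x' : StrongDual ℝ X} {c : ℝ} (hAc : fitzExt A x'' x' ≤ c) :
    x'' x' ≤ c := by
  have hc := fitzExt_le_coe_iff.mp hAc
  by_contra! hlt
  obtain ⟨x₀, hx₀⟩ := exists_apply_add_eq_zero x'' (a₀.2 - x')
  set G := inclusionInDoubleDual ℝ X x₀ + x''
  have hG : ∀ y : StrongDual ℝ X, G y = y x₀ + x'' y := fun y => by
    simp [G, dual_def]
  set U := G ⁻¹' Set.Ioi (G x' - (x'' x' - c))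
  have hx'U : x' ∈ U := by simp only [U, Set.mem_preimage, Set.mem_Ioi]; linarith
  have ha₀U : a₀.2 ∈ U := by
    simp only [U, Set.mem_preimage, Set.mem_Ioi, hG]
    simp only [sub_apply, map_sub] at hx₀
    linarith
  have hrel : ∀ a ∈ A, a.2 ∈ U → 0 ≤ (x' - a.2) (-x₀ - a.1) := by
    intro a ha haU
    simp only [U, Set.mem_preimage, Set.mem_Ioi, hG] at haU
    simp only [sub_apply, map_sub, map_neg]
    linarith [hc a ha]
  have hmem : (-x₀, x') ∈ A :=
    hFP U (isOpen_Ioi.preimage G.continuous) ((convex_Ioi _).linear_preimage G.toLinearMap)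
      ⟨a₀.2, ha₀U, a₀, ha₀, rfl⟩ (-x₀) x' hx'U hrel
  linarith [hc _ hmem]

end

theorem typeFP_implies_typeNI_general [NormedAddCommGroup X] [NormedSpace ℝ X]
    (A : Set (X × StrongDual ℝ X)) (hA : IsMaxMonotoneGraph A) (hFP : IsTypeFP A) :
    IsTypeNI A := by
  intro x'' x'
  by_contra! hlt
  obtain ⟨c, hAc, hcx⟩ := EReal.exists_between_coe_real hlt
  obtain ⟨a₀, ha₀⟩ := hA.nonempty
  exact (EReal.coe_lt_coe_iff.mp hcx).not_ge (hFP.apply_le_of_fitzExt_le ha₀ hAc.le)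

/-- Main result: every maximally monotone operator of type (FP) is of
type (NI). -/
theorem typeFP_implies_typeNI [NormedAddCommGroup X] [NormedSpace ℝ X] [CompleteSpace X]
    (A : Set (X × StrongDual ℝ X)) (hA : IsMaxMonotoneGraph A) (hFP : IsTypeFP A) :
    IsTypeNI A :=
  typeFP_implies_typeNI_general A hA hFP
end
end

section
/- Let X be a real Banach space and A : X ⇒ X* a maximally monotone operator of type (D). Then for every (x**, x*) ∈ X** × X* that is monotonically related to gra A in the bidual sense (i.e., ⟨a − x**, a* − x*⟩ ≥ 0 for all (a, a*) ∈ gra A), one has F_A(x**, x*) = ⟨x**, x*⟩. -/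
open NormedSpace Filter

noncomputable section

variable {X : Type*}

/-! The bound `fitzExt A x'' x' ≤ ⟨x'', x'⟩` is the monotone relation read term by term. For the
reverse bound, type (D) gives a bounded net `(aᵢ, aᵢ*)` in the graph converging to `(x'', x')`
weak* × norm. Boundedness of `aᵢ` and norm convergence of `aᵢ*` make `⟨aᵢ, aᵢ*⟩` behave like
`⟨aᵢ, x'⟩ → ⟨x'', x'⟩`, so the Fitzpatrick terms `⟨x'', aᵢ*⟩ + ⟨aᵢ, x'⟩ - ⟨aᵢ, aᵢ*⟩` tend to
`⟨x'', x'⟩`. -/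

theorem tendsto_apply_of_tendsto_of_norm_le {ι 𝕜 E F : Type*} [NontriviallyNormedField 𝕜]
    [SeminormedAddCommGroup E] [NormedSpace 𝕜 E] [SeminormedAddCommGroup F] [NormedSpace 𝕜 F]
    {l : Filter ι} {v : ι → E →L[𝕜] F} {w : E →L[𝕜] F} {u : ι → E} {M : ℝ} {c : F}
    (hu : ∀ i, ‖u i‖ ≤ M) (hv : Tendsto v l (nhds w)) (hw : Tendsto (fun i => w (u i)) l (nhds c)) :
    Tendsto (fun i => v i (u i)) l (nhds c) := by
  have hdiff : Tendsto (fun i => (v i - w) (u i)) l (nhds 0) := by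
    have hvw : Tendsto (fun i => ‖v i - w‖ * M) l (nhds 0) := by
      simpa using (tendsto_iff_norm_sub_tendsto_zero.mp hv).mul_const M
    refine squeeze_zero_norm (fun i => ?_) hvw
    exact ((v i - w).le_opNorm (u i)).trans (by gcongr; exact hu i)
  simpa using hdiff.add hw

section Fitzpatrick

variable [NormedAddCommGroup X] [NormedSpace ℝ X] {A : Set (X × StrongDual ℝ X)}
  {x'' : StrongDual ℝ (StrongDual ℝ X)} {x' : StrongDual ℝ X}

theorem le_fitzExt_of_mem {a : X × StrongDual ℝ X} (ha : a ∈ A) :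
    ((x'' a.2 + x' a.1 - a.2 a.1 : ℝ) : EReal) ≤ fitzExt A x'' x' :=
  le_iSup₂ (f := fun p (_ : p ∈ A) => ((x'' p.2 + x' p.1 - p.2 p.1 : ℝ) : EReal)) a ha

theorem fitzExt_le_pairing (hrel : ∀ a ∈ A, 0 ≤ a.2 a.1 - x' a.1 - x'' a.2 + x'' x') :
    fitzExt A x'' x' ≤ ((x'' x' : ℝ) : EReal) :=
  iSup₂_le fun a ha => EReal.coe_le_coe_iff.mpr (by linarith [hrel a ha])

end Fitzpatrick

theorem typeD_fitzExt_eq_pairing_general [NormedAddCommGroup X] [NormedSpace ℝ X]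
    (A : Set (X × StrongDual ℝ X)) (hD : IsTypeD A)
    (x'' : StrongDual ℝ (StrongDual ℝ X)) (x' : StrongDual ℝ X)
    (hrel : ∀ a ∈ A, 0 ≤ a.2 a.1 - x' a.1 - x'' a.2 + x'' x') :
    fitzExt A x'' x' = ((x'' x' : ℝ) : EReal) := by
  refine le_antisymm (fitzExt_le_pairing hrel) ?_
  obtain ⟨ι, l, hl, a, haA, ⟨M, hM⟩, hweak, hstrong⟩ := hD x'' x' hrel
  have hdiag : Tendsto (fun i => (a i).2 (a i).1) l (nhds (x'' x')) :=
    tendsto_apply_of_tendsto_of_norm_le (fun i => (hM i).1) hstrong (hweak x')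
  have hval : Tendsto (fun i => x'' (a i).2 + x' (a i).1 - (a i).2 (a i).1) l (nhds (x'' x')) := by
    simpa using (((x''.continuous.tendsto x').comp hstrong).add (hweak x')).sub hdiag
  exact le_of_tendsto ((continuous_coe_real_ereal.tendsto _).comp hval)
    (Eventually.of_forall fun i => le_fitzExt_of_mem (haA i))

/-- for a maximally monotone operator of type (D), the extended Fitzpatrick
function equals the pairing at any point monotonically related to the graph in the bidual
sense. -/
theorem typeD_fitzExt_eq_pairing [NormedAddCommGroup X] [NormedSpace ℝ X] [CompleteSpace X]
    (A : Set (X × StrongDual ℝ X)) (hA : IsMaxMonotoneGraph A) (hD : IsTypeD A)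
    (x'' : StrongDual ℝ (StrongDual ℝ X)) (x' : StrongDual ℝ X)
    (hrel : ∀ a ∈ A, 0 ≤ a.2 a.1 - x' a.1 - x'' a.2 + x'' x') :
    fitzExt A x'' x' = ((x'' x' : ℝ) : EReal) :=
  typeD_fitzExt_eq_pairing_general A hD x'' x' hrel
end
end

section
/- Let X be a reflexive real Banach space and A : X ⇒ X* maximally monotone. Then A is of type (NI): identifying X** with X, F_A(x, x*) ≥ ⟨x, x*⟩ for all (x, x*) ∈ X × X*. -/
open NormedSpace Filter

noncomputable section

variable {X : Type*}

/-!
If `F_A(x, x*) ≤ ⟨x, x*⟩`, then `(x, x*)` is monotonically related to every point of the graph,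
because `⟨x - a, x* - a*⟩ = ⟨x, x*⟩ - (⟨a, x*⟩ + ⟨a*, x⟩ - ⟨a, a*⟩)`. Maximality puts `(x, x*)` in
the graph, and then the term of the supremum at `(x, x*)` itself gives `F_A(x, x*) ≥ ⟨x, x*⟩`.
-/

section Fitzpatrick

variable [NormedAddCommGroup X] [NormedSpace ℝ X] {A : Set (X × StrongDual ℝ X)}

theorem sub_apply_sub_eq (x : X) (x' : StrongDual ℝ X) (a : X × StrongDual ℝ X) :
    (x' - a.2) (x - a.1) = x' x - (a.2 x + x' a.1 - a.2 a.1) := by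
  simp only [sub_apply, map_sub]
  ring

theorem le_fitz_of_mem {a : X × StrongDual ℝ X} (ha : a ∈ A) (x : X) (x' : StrongDual ℝ X) :
    ((a.2 x + x' a.1 - a.2 a.1 : ℝ) : EReal) ≤ fitz A x x' :=
  le_iSup₂_of_le a ha le_rfl

theorem apply_le_fitz_of_mem {x : X} {x' : StrongDual ℝ X} (hx : (x, x') ∈ A) :
    ((x' x : ℝ) : EReal) ≤ fitz A x x' := by
  simpa using le_fitz_of_mem hx x x'

theorem monotonicallyRelated_of_fitz_le {x : X} {x' : StrongDual ℝ X}
    (h : fitz A x x' ≤ ((x' x : ℝ) : EReal)) :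
    ∀ a ∈ A, 0 ≤ (x' - a.2) (x - a.1) := by
  intro a ha
  have hle : a.2 x + x' a.1 - a.2 a.1 ≤ x' x :=
    EReal.coe_le_coe_iff.mp ((le_fitz_of_mem ha x x').trans h)
  rw [sub_apply_sub_eq]
  linarith

end Fitzpatrick

theorem reflexive_maxMonotone_typeNI_general [NormedAddCommGroup X] [NormedSpace ℝ X]
    (A : Set (X × StrongDual ℝ X)) (hA : IsMaxMonotoneGraph A)
    (x : X) (x' : StrongDual ℝ X) :
    ((x' x : ℝ) : EReal) ≤ fitz A x x' := by
  rcases le_total ((x' x : ℝ) : EReal) (fitz A x x') with h | h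
  · exact h
  · exact apply_le_fitz_of_mem (hA.2 x x' (monotonicallyRelated_of_fitz_le h))

/-- on a reflexive Banach space, every maximally monotone operator is of
type (NI); identifying `X**` with `X` this says `F_A ≥ ⟨·,·⟩` on `X × X*`. -/
theorem reflexive_maxMonotone_typeNI [NormedAddCommGroup X] [NormedSpace ℝ X]
    [CompleteSpace X]
    (hrefl : Function.Surjective (inclusionInDoubleDual ℝ X))
    (A : Set (X × StrongDual ℝ X)) (hA : IsMaxMonotoneGraph A)
    (x : X) (x' : StrongDual ℝ X) :
    ((x' x : ℝ) : EReal) ≤ fitz A x x' :=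
  reflexive_maxMonotone_typeNI_general A hA x x'
end
end
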